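/- arXiv:0809.1848 — 2 statements merged into one kernel-verified Lean document; each statement's English description precedes it below -/
import Mathlib

section
/- Define M(x) := (λ₂'(1−f(x)²) − f'(x)²)/(1−f(x)²)^{3/2} · ( √(1−R(x)²) + R(x)·arcsin(R(x)) ). There exist universal constants δ₀ > 0 and C > 0 such that for every integer N ≥ 1 and every 0 < δ < δ₀, ∫₀^δ M(x) dx ≤ C·δ². -/
open MeasureTheory Filter Real Topology

/-- `m = N + 1/2`. -/
noncomputable def mval (N : ℕ) : ℝ := (N : ℝ) + 1 / 2

/-- The scaled covariance function
`f(x) = r_{X_N}(x/m) = (1/N)Σ_{n=1}^N cos(nx/m)`. -/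
noncomputable def f (N : ℕ) (x : ℝ) : ℝ :=
  (1 / N) * ∑ n ∈ Finset.Icc 1 N, Real.cos (n * x / mval N)

/-- `λ₂' = (1 + 1/(2m))/3`. -/
noncomputable def lam2' (N : ℕ) : ℝ := (1 + 1 / (2 * mval N)) / 3

/-- `R(x) = (f''(x)(1−f(x)²) + f(x)f'(x)²)/(λ₂'(1−f(x)²) − f'(x)²)`. -/
noncomputable def R (N : ℕ) (x : ℝ) : ℝ :=
  (deriv (deriv (f N)) x * (1 - f N x ^ 2) + f N x * deriv (f N) x ^ 2) /
    (lam2' N * (1 - f N x ^ 2) - deriv (f N) x ^ 2)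

/-- `M(x) = (λ₂'(1−f(x)²) − f'(x)²)/(1−f(x)²)^{3/2} · (√(1−R(x)²) + R(x)·arcsin R(x))`. -/
noncomputable def Mfun (N : ℕ) (x : ℝ) : ℝ :=
  (lam2' N * (1 - f N x ^ 2) - deriv (f N) x ^ 2) / (1 - f N x ^ 2) ^ ((3 : ℝ) / 2) *
    (Real.sqrt (1 - R N x ^ 2) + R N x * Real.arcsin (R N x))

/-! Near the origin, uniformly in `N`, `f x = 1 - λ₂' x²/2 + O(x⁴)`, `f' x = -λ₂' x + O(x³)` and
`f'' x = -λ₂' + O(x²)`: every frequency `n/m` lies in `[0, 1]`, and `λ₂'` is the mean of their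
squares. Hence `1 - f² ≥ x²/4`, while the leading terms cancel in both `λ₂'(1 - f²) - f'²` and
`f''(1 - f²) + f f'²`, which are `O(x⁴)`. As `√(1 - R²) ≤ 1` and `|arcsin R| ≤ π/2`, this gives
`|M x| = O(x⁴ / x³) = O(x)`, and integrating over `[0, δ]` gives `O(δ²)`. -/

open Finset

lemma mval_pos (N : ℕ) : 0 < mval N := by unfold mval; positivity

lemma abs_div_mval_le_one {N n : ℕ} (hn : n ∈ Icc 1 N) : |(n : ℝ) / mval N| ≤ 1 := by
  rw [abs_of_nonneg (by have := mval_pos N; positivity), div_le_one (mval_pos N)]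
  have : (n : ℝ) ≤ N := by exact_mod_cast (mem_Icc.mp hn).2
  unfold mval; linarith

lemma sum_Icc_sq (N : ℕ) : ∑ n ∈ Icc 1 N, (n : ℝ) ^ 2 = N * (N + 1) * (2 * N + 1) / 6 := by
  induction N with
  | zero => simp
  | succ k ih =>
    rw [sum_Icc_succ_top (by omega), ih]
    push_cast; ring

lemma lam2'_eq_mean (N : ℕ) (hN : 1 ≤ N) :
    lam2' N = (1 / N) * ∑ n ∈ Icc 1 N, ((n : ℝ) / mval N) ^ 2 := by
  have hN0 : (N : ℝ) ≠ 0 := by positivity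
  simp only [div_pow, ← sum_div, sum_Icc_sq, lam2', mval]
  field_simp
  ring

lemma lam2'_mem_Icc (N : ℕ) (hN : 1 ≤ N) : lam2' N ∈ Set.Icc (1 / 3) (1 / 2) := by
  have hN' : (1 : ℝ) ≤ N := by exact_mod_cast hN
  have hpos : 0 < 1 / (2 * mval N) := by have := mval_pos N; positivity
  have hle : 1 / (2 * mval N) ≤ 1 / 2 := by
    gcongr; unfold mval; linarith
  constructor <;> unfold lam2' <;> linarith

lemma abs_mean_le {ι : Type*} {s : Finset ι} (hs : s.Nonempty) {g : ι → ℝ} {b : ℝ}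
    (h : ∀ i ∈ s, |g i| ≤ b) : |(1 / #s) * ∑ i ∈ s, g i| ≤ b := by
  rw [abs_mul, abs_of_pos (by simp [hs.card_pos]), one_div_mul_eq_div,
    div_le_iff₀ (by simp [hs.card_pos]), mul_comm]
  simpa using (abs_sum_le_sum_abs g s).trans (sum_le_card_nsmul s _ b h)

lemma abs_mean_Icc_le {N : ℕ} (hN : 1 ≤ N) {g : ℕ → ℝ} {b : ℝ} (h : ∀ n ∈ Icc 1 N, |g n| ≤ b) :
    |(1 / N) * ∑ n ∈ Icc 1 N, g n| ≤ b := by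
  simpa using abs_mean_le (nonempty_Icc.mpr hN) h

section SingleMode

variable {ω x : ℝ}

lemma abs_cos_mul_sub_le (hω : |ω| ≤ 1) (hx : |x| ≤ 1) :
    |cos (ω * x) - (1 - ω ^ 2 * x ^ 2 / 2)| ≤ x ^ 4 * (5 / 96) := by
  have hωx : |ω * x| ≤ |x| := by
    rw [abs_mul]; exact mul_le_of_le_one_left (abs_nonneg x) hω
  calc |cos (ω * x) - (1 - ω ^ 2 * x ^ 2 / 2)| = |cos (ω * x) - (1 - (ω * x) ^ 2 / 2)| := by
        ring_nf
    _ ≤ |ω * x| ^ 4 * (5 / 96) := cos_bound (hωx.trans hx)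
    _ ≤ |x| ^ 4 * (5 / 96) := by gcongr
    _ = x ^ 4 * (5 / 96) := by rw [pow_abs, abs_of_nonneg (by positivity)]

lemma abs_sq_mul_sub_mul_sin_mul_le (hω : |ω| ≤ 1) :
    |ω ^ 2 * x - ω * sin (ω * x)| ≤ |x| ^ 3 / 6 := by
  have hωx : |ω * x| ≤ |x| := by
    rw [abs_mul]; exact mul_le_of_le_one_left (abs_nonneg x) hω
  calc |ω ^ 2 * x - ω * sin (ω * x)| = |ω| * |ω * x - sin (ω * x)| := by
        rw [← abs_mul]; ring_nf
    _ ≤ 1 * (|ω * x| ^ 3 / 6) := by gcongr; exact abs_sub_sin_le _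
    _ ≤ |x| ^ 3 / 6 := by rw [one_mul]; gcongr

lemma abs_sq_sub_sq_mul_cos_mul_le (hω : |ω| ≤ 1) :
    |ω ^ 2 - ω ^ 2 * cos (ω * x)| ≤ x ^ 2 / 2 := by
  have h₀ : 0 ≤ 1 - cos (ω * x) := by linarith [cos_le_one (ω * x)]
  have h₁ : 1 - cos (ω * x) ≤ (ω * x) ^ 2 / 2 := by
    linarith [one_sub_sq_div_two_le_cos (x := ω * x)]
  have hω2 : ω ^ 2 ≤ 1 := by rw [← sq_abs]; exact pow_le_one₀ (abs_nonneg ω) hω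
  rw [← mul_one_sub, abs_of_nonneg (by positivity)]
  calc ω ^ 2 * (1 - cos (ω * x)) ≤ 1 * (ω ^ 2 * x ^ 2 / 2) := by
        gcongr; linarith [mul_pow ω x 2]
    _ ≤ x ^ 2 / 2 := by rw [one_mul]; gcongr; nlinarith [sq_nonneg x]

end SingleMode

noncomputable def f' (N : ℕ) (x : ℝ) : ℝ :=
  (1 / N) * ∑ n ∈ Icc 1 N, -((n / mval N) * sin (n / mval N * x))

noncomputable def f'' (N : ℕ) (x : ℝ) : ℝ :=
  (1 / N) * ∑ n ∈ Icc 1 N, -((n / mval N) ^ 2 * cos (n / mval N * x))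

lemma f_eq (N : ℕ) (x : ℝ) : f N x = (1 / N) * ∑ n ∈ Icc 1 N, cos (n / mval N * x) := by
  simp only [f, mul_div_right_comm]

lemma hasDerivAt_f (N : ℕ) (x : ℝ) : HasDerivAt (f N) (f' N x) x := by
  rw [funext (f_eq N)]
  refine (HasDerivAt.fun_sum fun n _ => ?_).const_mul _
  simpa [mul_comm] using ((hasDerivAt_id x).const_mul ((n : ℝ) / mval N)).cos

lemma hasDerivAt_f' (N : ℕ) (x : ℝ) : HasDerivAt (f' N) (f'' N x) x := by
  refine (HasDerivAt.fun_sum fun n _ => ?_).const_mul _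
  set ω : ℝ := n / mval N
  simpa [sq, mul_assoc, mul_comm (cos _)] using
    (((hasDerivAt_id x).const_mul ω).sin.const_mul ω).fun_neg

lemma deriv_f (N : ℕ) : deriv (f N) = f' N := funext fun x => (hasDerivAt_f N x).deriv

lemma deriv_deriv_f (N : ℕ) : deriv (deriv (f N)) = f'' N := by
  rw [deriv_f]; exact funext fun x => (hasDerivAt_f' N x).deriv

section Expansion

variable {N : ℕ} {x : ℝ}

lemma abs_f_sub_le (hN : 1 ≤ N) (hx : |x| ≤ 1) :
    |f N x - (1 - lam2' N * x ^ 2 / 2)| ≤ x ^ 4 * (5 / 96) := by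
  have hN0 : (N : ℝ) ≠ 0 := by positivity
  have : f N x - (1 - lam2' N * x ^ 2 / 2) =
      (1 / N) * ∑ n ∈ Icc 1 N, (cos (n / mval N * x) - (1 - (n / mval N) ^ 2 * x ^ 2 / 2)) := by
    simp only [f_eq, lam2'_eq_mean N hN, sum_sub_distrib, sum_const, Nat.card_Icc,
      Nat.add_sub_cancel, nsmul_one, ← sum_div, ← sum_mul]
    generalize ∑ n ∈ Icc 1 N, cos (n / mval N * x) = C
    field_simp
  rw [this]
  exact abs_mean_Icc_le hN fun n hn =>
    abs_cos_mul_sub_le (abs_div_mval_le_one hn) hx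

lemma abs_f'_add_le (hN : 1 ≤ N) : |f' N x + lam2' N * x| ≤ |x| ^ 3 / 6 := by
  have : f' N x + lam2' N * x =
      (1 / N) * ∑ n ∈ Icc 1 N, ((n / mval N) ^ 2 * x - n / mval N * sin (n / mval N * x)) := by
    simp only [f', lam2'_eq_mean N hN, sum_sub_distrib, ← sum_mul, sum_neg_distrib]
    ring
  rw [this]
  exact abs_mean_Icc_le hN fun n hn =>
    abs_sq_mul_sub_mul_sin_mul_le (abs_div_mval_le_one hn)

lemma abs_f''_add_le (hN : 1 ≤ N) : |f'' N x + lam2' N| ≤ x ^ 2 / 2 := by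
  have : f'' N x + lam2' N =
      (1 / N) * ∑ n ∈ Icc 1 N, ((n / mval N) ^ 2 - (n / mval N) ^ 2 * cos (n / mval N * x)) := by
    simp only [f'', lam2'_eq_mean N hN, sum_sub_distrib, sum_neg_distrib]
    ring
  rw [this]
  exact abs_mean_Icc_le hN fun n hn =>
    abs_sq_sub_sq_mul_cos_mul_le (abs_div_mval_le_one hn)

end Expansion

section LocalExpansion

variable {l F F₁ F₂ x : ℝ}

lemma abs_one_sub_sq_sub_le (hl : l ∈ Set.Icc 0 (1 / 2)) (hx : x ∈ Set.Icc 0 1)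
    (h₀ : |F - (1 - l * x ^ 2 / 2)| ≤ x ^ 4 * (5 / 96)) :
    |1 - F ^ 2 - l * x ^ 2| ≤ x ^ 4 / 2 := by
  obtain ⟨hl₀, hl₁⟩ := hl
  set e := F - (1 - l * x ^ 2 / 2)
  have hx2 : x ^ 2 ≤ 1 := pow_le_one₀ hx.1 hx.2
  have hx4 : 0 ≤ x ^ 4 := by positivity
  have he2 : e ^ 2 ≤ x ^ 4 / 16 := by
    rw [← sq_abs]
    nlinarith [abs_nonneg e, pow_le_one₀ (n := 4) hx.1 hx.2]
  have hlx : |1 - l * x ^ 2 / 2| ≤ 1 := abs_le.mpr ⟨by nlinarith, by nlinarith [sq_nonneg x]⟩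
  have hmid : |2 * e * (1 - l * x ^ 2 / 2)| ≤ 2 * (x ^ 4 * (5 / 96)) := by
    rw [abs_mul, abs_mul, abs_two]
    nlinarith [abs_nonneg e, abs_nonneg (1 - l * x ^ 2 / 2)]
  have hl2 : l ^ 2 * x ^ 4 / 4 ≤ x ^ 4 / 16 := by
    nlinarith [mul_le_mul_of_nonneg_right (by nlinarith : l ^ 2 ≤ 1 / 4) hx4]
  calc |1 - F ^ 2 - l * x ^ 2| = |l ^ 2 * x ^ 4 / 4 + 2 * e * (1 - l * x ^ 2 / 2) + e ^ 2| := by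
        rw [← abs_neg]; congr 1; simp only [e]; ring
    _ ≤ |l ^ 2 * x ^ 4 / 4| + |2 * e * (1 - l * x ^ 2 / 2)| + |e ^ 2| := abs_add_three _ _ _
    _ ≤ x ^ 4 / 2 := by
        rw [abs_of_nonneg (by positivity), abs_of_nonneg (sq_nonneg e)]
        linarith

lemma abs_sq_sub_sq_le (hl : l ∈ Set.Icc 0 (1 / 2)) (hx : x ∈ Set.Icc 0 1)
    (h₁ : |F₁ + l * x| ≤ x ^ 3 / 6) :
    |F₁ ^ 2 - l ^ 2 * x ^ 2| ≤ x ^ 4 / 2 := by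
  obtain ⟨hx₀, hx₁⟩ := hx
  have hx3 : x ^ 3 / 6 ≤ x / 6 := by nlinarith [pow_le_one₀ (n := 2) hx₀ hx₁]
  have hsub : |F₁ - l * x| ≤ 2 * x := by
    calc |F₁ - l * x| = |(F₁ + l * x) - 2 * l * x| := by ring_nf
      _ ≤ |F₁ + l * x| + |2 * l * x| := abs_sub _ _
      _ ≤ 2 * x := by
          rw [abs_of_nonneg (by nlinarith [hl.1] : 0 ≤ 2 * l * x)]
          nlinarith [hl.2]
  calc |F₁ ^ 2 - l ^ 2 * x ^ 2| = |F₁ + l * x| * |F₁ - l * x| := by rw [← abs_mul]; ring_nf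
    _ ≤ x ^ 3 / 6 * (2 * x) := mul_le_mul h₁ hsub (abs_nonneg _) (by positivity)
    _ ≤ x ^ 4 / 2 := by nlinarith [pow_nonneg hx₀ 4]

lemma sq_div_four_le_one_sub_sq (hl : 1 / 3 ≤ l) (hx : x ∈ Set.Icc 0 (1 / 3))
    (hp : |1 - F ^ 2 - l * x ^ 2| ≤ x ^ 4 / 2) : x ^ 2 / 4 ≤ 1 - F ^ 2 := by
  have hx2 : x ^ 2 ≤ 1 / 9 := by nlinarith [hx.1, hx.2]
  nlinarith [(abs_le.mp hp).1, mul_le_mul_of_nonneg_left hx2 (sq_nonneg x),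
    mul_le_mul_of_nonneg_right hl (sq_nonneg x)]

lemma abs_mul_one_sub_sq_sub_sq_le (hl : l ∈ Set.Icc 0 (1 / 2))
    (hp : |1 - F ^ 2 - l * x ^ 2| ≤ x ^ 4 / 2) (hq : |F₁ ^ 2 - l ^ 2 * x ^ 2| ≤ x ^ 4 / 2) :
    |l * (1 - F ^ 2) - F₁ ^ 2| ≤ x ^ 4 :=
  calc |l * (1 - F ^ 2) - F₁ ^ 2| = |l * (1 - F ^ 2 - l * x ^ 2) - (F₁ ^ 2 - l ^ 2 * x ^ 2)| := by
        ring_nf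
    _ ≤ |l * (1 - F ^ 2 - l * x ^ 2)| + |F₁ ^ 2 - l ^ 2 * x ^ 2| := abs_sub _ _
    _ ≤ 1 / 2 * (x ^ 4 / 2) + x ^ 4 / 2 := by
        rw [abs_mul, abs_of_nonneg (by linarith [hl.1])]
        gcongr
        exact hl.2
    _ ≤ x ^ 4 := by nlinarith [pow_nonneg (sq_nonneg x) 2]

lemma abs_mul_one_sub_sq_add_mul_sq_le (hl : l ∈ Set.Icc (1 / 3) (1 / 2)) (hx : x ∈ Set.Icc 0 1)
    (h₀ : |F - (1 - l * x ^ 2 / 2)| ≤ x ^ 4 * (5 / 96)) (h₂ : |F₂ + l| ≤ x ^ 2 / 2)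
    (hp : |1 - F ^ 2 - l * x ^ 2| ≤ x ^ 4 / 2) (hq : |F₁ ^ 2 - l ^ 2 * x ^ 2| ≤ x ^ 4 / 2) :
    |F₂ * (1 - F ^ 2) + F * F₁ ^ 2| ≤ 2 * x ^ 4 := by
  obtain ⟨hl₀, hl₁⟩ := hl
  obtain ⟨hx₀, hx₁⟩ := hx
  have hx2 : x ^ 2 ≤ 1 := pow_le_one₀ hx₀ hx₁
  have hx4 : 0 ≤ x ^ 4 := by positivity
  obtain ⟨h₀l, h₀r⟩ := abs_le.mp h₀
  have h1F : 0 ≤ 1 - F ∧ 1 - F ≤ x ^ 2 / 2 := ⟨by nlinarith, by nlinarith⟩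
  have hF : |F| ≤ 1 := abs_le.mpr ⟨by nlinarith, by linarith⟩
  have h1F2 : |1 - F ^ 2| ≤ x ^ 2 := by
    rw [abs_of_nonneg (by nlinarith [abs_le.mp hF])]
    nlinarith [(abs_le.mp hp).2]
  have t₁ : |(F₂ + l) * (1 - F ^ 2)| ≤ x ^ 2 / 2 * x ^ 2 := by
    rw [abs_mul]; gcongr
  have t₂ : |l * (1 - F ^ 2 - l * x ^ 2)| ≤ 1 / 2 * (x ^ 4 / 2) := by
    rw [abs_mul, abs_of_nonneg (by linarith)]; gcongr
  have t₃ : |F * (F₁ ^ 2 - l ^ 2 * x ^ 2)| ≤ 1 * (x ^ 4 / 2) := by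
    rw [abs_mul]; gcongr
  have t₄ : |l ^ 2 * x ^ 2 * (1 - F)| ≤ 1 / 4 * x ^ 2 * (x ^ 2 / 2) := by
    rw [abs_of_nonneg (by have := h1F.1; positivity)]
    gcongr <;> nlinarith
  calc |F₂ * (1 - F ^ 2) + F * F₁ ^ 2|
      = |(F₂ + l) * (1 - F ^ 2) - l * (1 - F ^ 2 - l * x ^ 2)
          + F * (F₁ ^ 2 - l ^ 2 * x ^ 2) - l ^ 2 * x ^ 2 * (1 - F)| := by ring_nf
    _ ≤ |(F₂ + l) * (1 - F ^ 2)| + |l * (1 - F ^ 2 - l * x ^ 2)|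
          + |F * (F₁ ^ 2 - l ^ 2 * x ^ 2)| + |l ^ 2 * x ^ 2 * (1 - F)| :=
        (abs_sub _ _).trans (add_le_add_left ((abs_add_le _ _).trans
          (add_le_add_left (abs_sub _ _) _)) _)
    _ ≤ 2 * x ^ 4 := by nlinarith

end LocalExpansion

lemma abs_mul_sqrt_add_mul_arcsin_le (D P : ℝ) :
    |D * (√(1 - (P / D) ^ 2) + P / D * arcsin (P / D))| ≤ |D| + |P| * (π / 2) := by
  rcases eq_or_ne D 0 with rfl | hD
  · simpa using mul_nonneg (abs_nonneg P) (by positivity : 0 ≤ π / 2)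
  have harcsin : |arcsin (P / D)| ≤ π / 2 :=
    abs_le.mpr ⟨neg_pi_div_two_le_arcsin _, arcsin_le_pi_div_two _⟩
  have hsqrt : |√(1 - (P / D) ^ 2)| ≤ 1 := by
    rw [abs_of_nonneg (sqrt_nonneg _), sqrt_le_one]; nlinarith [sq_nonneg (P / D)]
  rw [mul_add, ← mul_assoc, mul_div_cancel₀ P hD]
  calc _ ≤ |D * √(1 - (P / D) ^ 2)| + |P * arcsin (P / D)| := abs_add_le _ _
    _ ≤ |D| * 1 + |P| * (π / 2) := by rw [abs_mul, abs_mul]; gcongr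
    _ = |D| + |P| * (π / 2) := by rw [mul_one]

lemma abs_Mfun_le {N : ℕ} (hN : 1 ≤ N) {x : ℝ} (hx : x ∈ Set.Ioc 0 (1 / 3)) :
    |Mfun N x| ≤ 40 * x := by
  obtain ⟨hx₀, hx₁⟩ := hx
  have hxI : x ∈ Set.Icc 0 1 := ⟨hx₀.le, by linarith⟩
  have hl := lam2'_mem_Icc N hN
  have hl' : lam2' N ∈ Set.Icc 0 (1 / 2) := Set.Icc_subset_Icc_left (by norm_num) hl
  have h₀ := abs_f_sub_le (x := x) hN (by rw [abs_of_pos hx₀]; linarith)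
  have h₁ : |deriv (f N) x + lam2' N * x| ≤ x ^ 3 / 6 := by
    simpa [deriv_f, abs_of_pos hx₀] using abs_f'_add_le (x := x) hN
  have h₂ : |deriv (deriv (f N)) x + lam2' N| ≤ x ^ 2 / 2 := by
    simpa [deriv_deriv_f] using abs_f''_add_le (x := x) hN
  have hp := abs_one_sub_sq_sub_le hl' hxI h₀
  have hq := abs_sq_sub_sq_le hl' hxI h₁
  have hD := abs_mul_one_sub_sq_sub_sq_le hl' hp hq
  have hP := abs_mul_one_sub_sq_add_mul_sq_le hl hxI h₀ h₂ hp hq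
  have hS : (x / 2) ^ 3 ≤ (1 - f N x ^ 2) ^ ((3 : ℝ) / 2) := by
    calc (x / 2) ^ 3 = ((x / 2) ^ 2) ^ ((3 : ℝ) / 2) := by
          rw [← rpow_natCast, ← rpow_natCast, ← rpow_mul (by positivity)]; norm_num
      _ ≤ (1 - f N x ^ 2) ^ ((3 : ℝ) / 2) := by
          gcongr
          linarith [sq_div_four_le_one_sub_sq hl.1 ⟨hx₀.le, hx₁⟩ hp]
  have hSpos : 0 < (1 - f N x ^ 2) ^ ((3 : ℝ) / 2) := (by positivity : 0 < (x / 2) ^ 3).trans_le hS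
  rw [Mfun, R, div_mul_eq_mul_div, abs_div, abs_of_pos hSpos]
  calc _ ≤ (x ^ 4 + 2 * x ^ 4 * (π / 2)) / (x / 2) ^ 3 := by
        gcongr
        exact (abs_mul_sqrt_add_mul_arcsin_le _ _).trans (by gcongr)
    _ = 8 * (1 + π) * x := by field_simp; norm_num
    _ ≤ 40 * x := by nlinarith [pi_lt_four]

/-- there are universal constants `δ₀ > 0` and `C > 0` such that for every
`N ≥ 1` and every `0 < δ < δ₀` one has `∫₀^δ M(x) dx = O(δ²)`, i.e.
`|∫₀^δ M(x) dx| ≤ C·δ²`. -/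
theorem integral_near_origin_small :
    ∃ δ₀ > (0 : ℝ), ∃ C > (0 : ℝ), ∀ N : ℕ, 1 ≤ N → ∀ δ : ℝ, 0 < δ → δ < δ₀ →
      |∫ x in (0 : ℝ)..δ, Mfun N x| ≤ C * δ ^ 2 := by
  refine ⟨1 / 3, by norm_num, 40, by norm_num, fun N hN δ hδ hδ₀ => ?_⟩
  have hM : ∀ x ∈ Set.uIoc 0 δ, ‖Mfun N x‖ ≤ 40 * δ := fun x hx => by
    rw [Set.uIoc_of_le hδ.le] at hx
    exact (abs_Mfun_le hN ⟨hx.1, by linarith [hx.2]⟩).trans (by linarith [hx.2])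
  calc |∫ x in (0 : ℝ)..δ, Mfun N x| ≤ 40 * δ * |δ - 0| :=
        intervalIntegral.norm_integral_le_of_norm_le_const hM
    _ = 40 * δ ^ 2 := by rw [sub_zero, abs_of_pos hδ]; ring
end

section
/- Let I = [a,b] be an interval, A > 0, and h : I → ℝ a function satisfying |h(x) − h(y)| ≤ A·|x − y| for all x, y ∈ I. If b − a > (max_{x∈I}|h(x)|)/(2A), then for every x ∈ I one has |h(x)| ≤ 2·A^{1/3}·‖h‖_{L²(I)}^{2/3}. -/
/-!
Let `m = |h x₀|`. By the Lipschitz bound, `|h| ≥ 3m/4` within distance `m/(4A)` of `x₀`, and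
the gap hypothesis leaves room for a subinterval of `[a,b]` of that length. Hence
`∫_a^b h² ≥ (m/(4A))·(3m/4)² ≥ m³/(8A)`, and taking cube roots gives the claim.
-/

open MeasureTheory Set
open scoped NNReal

lemma exists_Icc_subset_Icc_closedBall {a b x₀ L : ℝ} (hx₀ : x₀ ∈ Icc a b) (hL : L ≤ b - a) :
    ∃ c, Icc c (c + L) ⊆ Icc a b ∧ Icc c (c + L) ⊆ Metric.closedBall x₀ L := by
  refine ⟨min x₀ (b - L), fun t ht => ?_, fun t ht => ?_⟩
  · have := min_le_left x₀ (b - L)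
    have := min_le_right x₀ (b - L)
    constructor <;> cases min_choice x₀ (b - L) <;> linarith [hx₀.1, hx₀.2, ht.1, ht.2]
  · rw [Metric.mem_closedBall, Real.dist_eq, abs_le]
    have := min_le_left x₀ (b - L)
    constructor <;> cases min_choice x₀ (b - L) <;> linarith [hx₀.2, ht.1, ht.2]

lemma LipschitzOnWith.abs_sub_mul_dist_le_abs {s : Set ℝ} {K : ℝ≥0} {f : ℝ → ℝ}
    (hf : LipschitzOnWith K f s) {x y : ℝ} (hx : x ∈ s) (hy : y ∈ s) :
    |f x| - K * dist y x ≤ |f y| := by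
  have := hf.dist_le_mul y hy x hx
  rw [Real.dist_eq] at this
  linarith [abs_sub_abs_le_abs_sub (f x) (f y), abs_sub_comm (f x) (f y)]

lemma LipschitzOnWith.abs_pow_three_le_integral_sq {a b x₀ : ℝ} {K : ℝ≥0} {f : ℝ → ℝ}
    (hf : LipschitzOnWith K f (Icc a b)) (hK : 0 < K) (hx₀ : x₀ ∈ Icc a b)
    (hlen : |f x₀| / (4 * K) ≤ b - a) :
    |f x₀| ^ 3 ≤ 8 * K * ∫ t in a..b, f t ^ 2 := by
  set m := |f x₀|
  set L := m / (4 * K) with hL_def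
  have hK₀ : (0 : ℝ) < K := hK
  have hL : 0 ≤ L := by positivity
  obtain ⟨c, hsub, hball⟩ := exists_Icc_subset_Icc_closedBall hx₀ hlen
  have hint : IntervalIntegrable (fun t => f t ^ 2) volume c (c + L) :=
    ((hf.continuousOn.pow 2).mono hsub).intervalIntegrable_of_Icc (by linarith)
  have hnear : ∀ t ∈ Icc c (c + L), (3 * m / 4) ^ 2 ≤ f t ^ 2 := by
    intro t ht
    have hdist : K * dist t x₀ ≤ m / 4 := by
      calc (K : ℝ) * dist t x₀ ≤ K * L := by gcongr; exact hball ht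
        _ = m / 4 := by rw [hL_def]; field_simp
    rw [← sq_abs (f t)]
    gcongr
    linarith [hf.abs_sub_mul_dist_le_abs hx₀ (hsub ht)]
  have hlower : L * (3 * m / 4) ^ 2 ≤ ∫ t in a..b, f t ^ 2 :=
    calc L * (3 * m / 4) ^ 2 = ∫ _ in c..(c + L), (3 * m / 4) ^ 2 := by simp
      _ ≤ ∫ t in c..(c + L), f t ^ 2 :=
        intervalIntegral.integral_mono_on (by linarith) intervalIntegrable_const hint hnear
      _ ≤ ∫ t in a..b, f t ^ 2 := by
        apply intervalIntegral.integral_mono_interval (hsub ⟨le_rfl, by linarith⟩).1 (by linarith)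
          (hsub ⟨by linarith, le_rfl⟩).2 (Filter.Eventually.of_forall fun t => sq_nonneg (f t))
        exact (hf.continuousOn.pow 2).intervalIntegrable_of_Icc (hx₀.1.trans hx₀.2)
  calc m ^ 3 ≤ 8 * K * (L * (3 * m / 4) ^ 2) := by
        have : 8 * K * (L * (3 * m / 4) ^ 2) = 9 / 8 * m ^ 3 := by rw [hL_def]; field_simp; ring
        rw [this]; linarith [pow_nonneg (abs_nonneg (f x₀)) 3]
    _ ≤ 8 * K * ∫ t in a..b, f t ^ 2 := by gcongr

lemma le_two_mul_rpow_mul_rpow_of_pow_three_le {y A I : ℝ} (hA : 0 ≤ A) (hI : 0 ≤ I)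
    (h : y ^ 3 ≤ 8 * A * I) : y ≤ 2 * A ^ ((1 : ℝ) / 3) * I ^ ((1 : ℝ) / 3) := by
  have cube_rpow {z : ℝ} (hz : 0 ≤ z) : (z ^ ((1 : ℝ) / 3)) ^ 3 = z := by
    rw [← Real.rpow_natCast, ← Real.rpow_mul hz]; norm_num
  refine le_of_pow_le_pow_left₀ three_ne_zero (by positivity) ?_
  rwa [mul_pow, mul_pow, cube_rpow hA, cube_rpow hI, show (2 : ℝ) ^ 3 = 8 by norm_num]

/-- if `h` is `A`-Lipschitz on `I = [a,b]` and
`b − a > (max_{x∈I}|h(x)|)/(2A)`, then `|h(x)| ≤ 2·A^{1/3}·‖h‖_{L²(I)}^{2/3}` for every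
`x ∈ I`, where `‖h‖_{L²(I)} = (∫_a^b h(x)² dx)^{1/2}`. -/
theorem sup_bound_from_L2_bound_of_lipschitz
    (a b A : ℝ) (hA : 0 < A) (h : ℝ → ℝ)
    (hLip : ∀ x ∈ Set.Icc a b, ∀ y ∈ Set.Icc a b, |h x - h y| ≤ A * |x - y|)
    (hgap : sSup ((fun x => |h x|) '' Set.Icc a b) / (2 * A) < b - a) :
    ∀ x ∈ Set.Icc a b,
      |h x| ≤ 2 * A ^ ((1 : ℝ) / 3) * (Real.sqrt (∫ t in a..b, h t ^ 2)) ^ ((2 : ℝ) / 3) := by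
  intro x hx
  set K : ℝ≥0 := ⟨A, hA.le⟩
  have hf : LipschitzOnWith K h (Icc a b) := .of_dist_le_mul hLip
  have hbdd : BddAbove ((fun x => |h x|) '' Icc a b) :=
    (isCompact_Icc.image_of_continuousOn hf.continuousOn.abs).bddAbove
  have hlen : |h x| / (4 * K) ≤ b - a := by
    calc |h x| / (4 * A) ≤ |h x| / (2 * A) :=
          div_le_div_of_nonneg_left (abs_nonneg _) (by positivity) (by linarith)
      _ ≤ sSup ((fun x => |h x|) '' Icc a b) / (2 * A) := by
          gcongr; exact le_csSup hbdd ⟨x, hx, rfl⟩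
      _ ≤ b - a := hgap.le
  have hI : 0 ≤ ∫ t in a..b, h t ^ 2 :=
    intervalIntegral.integral_nonneg (hx.1.trans hx.2) fun t _ => sq_nonneg (h t)
  rw [Real.sqrt_eq_rpow, ← Real.rpow_mul hI, show (1 : ℝ) / 2 * (2 / 3) = 1 / 3 by norm_num]
  exact le_two_mul_rpow_mul_rpow_of_pow_three_le hA.le hI (hf.abs_pow_three_le_integral_sq hA hx hlen)
end
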